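/- Let 𝒟 be the set of all dense subsets of the partial order (2^{<ω}, ⊇), and let E ⊆ 2^ω × 𝒟 be given by x E D iff {x↾n : n < ω} ∩ D = ∅; define cov(ℳ) as the evaluation of ⟨2^ω, 𝒟, E⟩. Fix functions cd : 𝒟 → 𝔓(ω) and dcd : 𝔓(ω) → 𝒟 with cd ∘ dcd = id, a fixed dense set D* ∈ 𝒟, and a function inpa : 𝔓(ω) → ℐ (ℐ the set of partitions of ω into consecutive finite intervals) such that for infinite X with increasing enumeration ⟨xₙ⟩, inpa(X) = {[0,x₀]} ∪ {(xₙ, x_{n+1}] : n < ω}. Define operations on 𝒟: F_c(D) = dcd(ω ∖ cd(D)); F_i(D,D') = dcd(cd(D) ∩ cd(D')); F_r(D,D',D'') = dcd(coh(cd(D), inpa(cd(D')), χ_{cd(D'')})); and for each n, m < ω, F_d^{n,m}(D₁,…,D_{2n}) = D(cd(D₁),…,cd(Dₙ); inpa(cd(D_{n+1})),…,inpa(cd(D_{2n})); m) when cd(D₁) ∩ … ∩ cd(Dₙ) is infinite, and D* otherwise. Let ℱ_{Q-pt} = {F_c, F_i, F_r} ∪ {F_d^{n,m} : n, m < ω}.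 If κ is a regular cardinal and there exists a ⟨⟨2^ω, 𝒟, E⟩, ℱ_{Q-pt}, κ⟩-pathway, then there exists a nonprincipal ultrafilter u on ω such that for every partition {Iₙ : n < ω} of ω into consecutive finite intervals there is Y ∈ u with |Y ∩ Iₙ| ≤ 1 for all n (a Q-point). -/

import Mathlib

open Cardinal Set

/-- A subset `S` is closed under a finitary operation `F` (presented as a pair of an
arity `n` and a function `(Fin n → B) → B`). -/
def ClosedUnderOp {B : Type*} (S : Set B) (F : Σ n : ℕ, (Fin n → B) → B) : Prop :=
  ∀ v : Fin F.1 → B, (∀ i, v i ∈ S) → F.2 v ∈ S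

/-- `IsPathway E 𝓕 δ seq` says that `⟨seq α : α < δ⟩` is a
`⟨⟨A,B,E⟩, 𝓕, δ⟩`-pathway: an increasing continuous sequence of subsets of `B`
whose union is all of `B`, such that no `seq α` is `E`-dominating, and with each
`seq α` closed under every operation in `𝓕`. -/
structure IsPathway {A B : Type*} (E : A → B → Prop)
    (𝓕 : Set (Σ n : ℕ, (Fin n → B) → B)) (δ : Ordinal)
    (seq : Ordinal → Set B) : Prop where
  mono : ∀ α β : Ordinal, α ≤ β → β < δ → seq α ⊆ seq β
  cont : ∀ γ : Ordinal, γ < δ → Order.IsSuccLimit γ → seq γ = ⋃ α : Ordinal, ⋃ _ : α < γ, seq α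
  total : (⋃ α : Ordinal, ⋃ _ : α < δ, seq α) = Set.univ
  avoid : ∀ α : Ordinal, α < δ → ∃ x : A, ∀ y ∈ seq α, ¬ E x y
  closedF : ∀ α : Ordinal, α < δ → ∀ F ∈ 𝓕, ClosedUnderOp (seq α) F

/-- The evaluation of the triple `⟨A, B, E⟩`: the least cardinality of an `E`-dominating
family `X ⊆ B`, i.e. of an `X` such that every `a ∈ A` is `E`-related to some `b ∈ X`. -/
noncomputable def evalTriple {A B : Type u} (E : A → B → Prop) : Cardinal.{u} :=
  sInf {c | ∃ X : Set B, #X = c ∧ ∀ a : A, ∃ b ∈ X, E a b}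

/-- `x ∈ 2^ω` extends `s ∈ 2^{<ω}`: `s` is an initial segment of `x`. -/
def ExtendsSeq (x : ℕ → Bool) (s : List Bool) : Prop :=
  ∀ (i : ℕ) (h : i < s.length), x i = s[i]

/-- `I : ℕ → Set ℕ` is a partition of `ω` into consecutive finite intervals: the pieces
are finite, nonempty, pairwise disjoint, cover `ω`, and every element of `Iₙ` is less
than every element of `I_{n+1}`. -/
structure IntervalPartition (I : ℕ → Set ℕ) : Prop where
  fin : ∀ n, (I n).Finite
  nonempty : ∀ n, (I n).Nonempty
  cover : (⋃ n, I n) = Set.univ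
  disj : ∀ m n, m ≠ n → Disjoint (I m) (I n)
  consec : ∀ n, ∀ a ∈ I n, ∀ b ∈ I (n + 1), a < b

/-- Minimum of a set of naturals, as an `Option` (`none` if the set is empty). -/
noncomputable def nmin (S : Set ℕ) : Option ℕ := by
  classical exact if S.Nonempty then some (sInf S) else none

/-- The recursive sequence of elements of the Cohen real `coh(X, I, x)`, defined for as
long as the minima exist: `x₀ = min {k ∈ X : x k = 1}`, and `x_{n+1}` is the least
`k ∈ X` with `x k = 1` such that whenever `k ∈ Iᵢ` and `xₙ ∈ Iⱼ`, then `j + 1 < i`. -/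
noncomputable def cohSeq (X : Set ℕ) (I : ℕ → Set ℕ) (x : ℕ → Bool) : ℕ → Option ℕ
  | 0 => nmin {k | k ∈ X ∧ x k = true}
  | n + 1 =>
    match cohSeq X I x n with
    | none => none
    | some p => nmin {k | k ∈ X ∧ x k = true ∧ ∀ i j, k ∈ I i → p ∈ I j → j + 1 < i}

/-- The Cohen real coded by `x` and associated to `X` and `I`: the set of values of the
(partial) recursive sequence `cohSeq`. -/
noncomputable def coh (X : Set ℕ) (I : ℕ → Set ℕ) (x : ℕ → Bool) : Set ℕ :=
  {k | ∃ n, cohSeq X I x n = some k}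

/-- The set `D(X₁,…,Xₙ; I₁,…,Iₙ; m) ⊆ 2^{<ω}` of conditions forcing
`|coh(X₁,I₁,x) ∩ … ∩ coh(Xₙ,Iₙ,x)| ≥ m`. -/
noncomputable def Dset {n : ℕ} (X : Fin n → Set ℕ) (I : Fin n → ℕ → Set ℕ) (m : ℕ) :
    Set (List Bool) :=
  {s | ∀ x : ℕ → Bool, ExtendsSeq x s →
    ∃ T : Finset ℕ, m ≤ T.card ∧ ↑T ⊆ ⋂ i, coh (X i) (I i) x}

/-- A subset of `2^{<ω}` is dense (in the partial order of reverse inclusion) if every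
finite binary sequence has an extension in it. -/
def IsDenseCond (D : Set (List Bool)) : Prop := ∀ s : List Bool, ∃ t ∈ D, s <+: t

/-- The set `𝒟` of all dense subsets of `(2^{<ω}, ⊇)`. -/
def DenseSet : Type := {D : Set (List Bool) // IsDenseCond D}

/-- The relation `E ⊆ 2^ω × 𝒟` of `cov(ℳ)`: `x E D` iff no initial segment of `x`
belongs to `D`. -/
def covME (x : ℕ → Bool) (D : DenseSet) : Prop :=
  ∀ n : ℕ, List.ofFn (fun i : Fin n => x i) ∉ D.1

/-- The characteristic function of `Z ⊆ ω`, viewed as an element of `2^ω`. -/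
noncomputable def chi (Z : Set ℕ) : ℕ → Bool := by
  classical exact fun k => decide (k ∈ Z)

open Classical in
/-- The `2n`-ary operation `F_d^{n,m}` on `𝒟`: it returns the dense set
`D(cd D₁,…,cd Dₙ; inpa (cd D_{n+1}),…, inpa (cd D_{2n}); m)` when
`cd D₁ ∩ … ∩ cd Dₙ` is infinite (and that set is indeed dense), and the fixed dense set
`D*` otherwise. -/
noncomputable def Fd (cd : DenseSet → Set ℕ) (inpa : Set ℕ → ℕ → Set ℕ)
    (Dstar : DenseSet) (n m : ℕ) (v : Fin (n + n) → DenseSet) : DenseSet :=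
  if h : (⋂ i : Fin n, cd (v (Fin.castAdd n i))).Infinite ∧
      IsDenseCond (Dset (fun i : Fin n => cd (v (Fin.castAdd n i)))
        (fun i : Fin n => inpa (cd (v (Fin.natAdd n i)))) m) then
    ⟨Dset (fun i : Fin n => cd (v (Fin.castAdd n i)))
      (fun i : Fin n => inpa (cd (v (Fin.natAdd n i)))) m, h.2⟩
  else Dstar

/-- The family `ℱ_{Q-pt} = {F_c, F_i, F_r} ∪ {F_d^{n,m} : n, m < ω}` of finitary
operations on `𝒟`. -/
noncomputable def QPtOps (cd : DenseSet → Set ℕ) (dcd : Set ℕ → DenseSet)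
    (inpa : Set ℕ → ℕ → Set ℕ) (Dstar : DenseSet) :
    Set (Σ k : ℕ, (Fin k → DenseSet) → DenseSet) :=
  {⟨1, fun v => dcd (cd (v 0))ᶜ⟩,
   ⟨2, fun v => dcd (cd (v 0) ∩ cd (v 1))⟩,
   ⟨3, fun v => dcd (coh (cd (v 0)) (inpa (cd (v 1))) (chi (cd (v 2))))⟩} ∪
  {F | ∃ n m : ℕ, F = ⟨n + n, Fd cd inpa Dstar n m⟩}

/-! A stage `α` of the pathway is closed under the operations of `ℱ_{Q-pt}`, so the sets coded
there form a Boolean algebra closed under `coh`, and a real `x α` meeting every dense set of the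
stage is generic over it: for `X₁, …, Xₙ` with infinite intersection and partitions `I₁, …, Iₙ`
coded at stage `α`, the sets `coh (Xᵢ, Iᵢ, x α)` have infinite intersection, because the sets
`D(X₁,…,Xₙ; I₁,…,Iₙ; m)` are dense.

To each `Z ⊆ ω` assign the selector `S Z = coh (ω, inpa Z, x (τ Z))` of the partition `inpa Z`,
with stages `τ Z` chosen (using regularity of `κ`) so that `S Z` is already coded at every later
value of `τ`. Induction on the largest `τ` shows that finitely many `S Z` have infinite
intersection, so they generate, together with the cofinite sets, a nonprincipal ultrafilter. It is
a Q-point because every interval partition is refined by `inpa Z` for `Z` the set of maxima of its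
intervals. -/

open Filter

theorem nmin_eq_some_iff {S : Set ℕ} {p : ℕ} : nmin S = some p ↔ IsLeast S p := by
  classical
  unfold nmin
  split_ifs with h
  · rw [Option.some.injEq]
    exact ⟨fun hp => hp ▸ ⟨Nat.sInf_mem h, fun k hk => Nat.sInf_le hk⟩, fun hp => hp.csInf_eq⟩
  · exact ⟨fun h' => (nomatch h'), fun hp => absurd ⟨p, hp.1⟩ h⟩

theorem exists_nmin_eq_some {S : Set ℕ} {p : ℕ} (hp : p ∈ S) : ∃ q, nmin S = some q := by
  classical
  exact ⟨sInf S, by rw [nmin, if_pos ⟨p, hp⟩]⟩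

theorem chi_setOf_eq_true (x : ℕ → Bool) : chi {k | x k = true} = x := by
  funext k
  simp [chi]

theorem extendsSeq_ofFn (x : ℕ → Bool) (n : ℕ) :
    ExtendsSeq x (List.ofFn fun i : Fin n => x i) := by
  intro i hi
  simp

theorem ExtendsSeq.apply_length_add {x : ℕ → Bool} {s : List Bool} {L : ℕ} {g : Fin L → Bool}
    (h : ExtendsSeq x (s ++ List.ofFn g)) (r : Fin L) : x (s.length + r) = g r := by
  simpa [List.getElem_append_right] using h (s.length + r) (by simp)

namespace IntervalPartition

variable {I : ℕ → Set ℕ}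

theorem exists_mem (hI : IntervalPartition I) (k : ℕ) : ∃ a, k ∈ I a :=
  Set.mem_iUnion.1 (hI.cover ▸ Set.mem_univ k)

noncomputable def index (hI : IntervalPartition I) (k : ℕ) : ℕ := (hI.exists_mem k).choose

theorem mem_index (hI : IntervalPartition I) (k : ℕ) : k ∈ I (hI.index k) :=
  (hI.exists_mem k).choose_spec

theorem index_eq_of_mem (hI : IntervalPartition I) {k a : ℕ} (h : k ∈ I a) : hI.index k = a := by
  by_contra hne
  exact (hI.disj _ _ hne).ne_of_mem (hI.mem_index k) h rfl

theorem lt_of_mem_of_lt (hI : IntervalPartition I) {a b p q : ℕ} (hab : a < b) (hp : p ∈ I a)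
    (hq : q ∈ I b) : p < q := by
  induction b, hab using Nat.le_induction generalizing q with
  | base => exact hI.consec a p hp q hq
  | succ b _ ih =>
    obtain ⟨r, hr⟩ := hI.nonempty b
    exact (ih hr).trans (hI.consec b r hr q hq)

theorem lt_of_index_lt (hI : IntervalPartition I) {p q : ℕ} (h : hI.index p < hI.index q) :
    p < q :=
  hI.lt_of_mem_of_lt h (hI.mem_index p) (hI.mem_index q)

theorem index_mono (hI : IntervalPartition I) : Monotone hI.index := fun _ _ hpq =>
  not_lt.1 fun h => (hI.lt_of_index_lt h).not_ge hpq

theorem tendsto_index (hI : IntervalPartition I) : Tendsto hI.index atTop atTop :=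
  tendsto_atTop_atTop_of_monotone hI.index_mono fun a =>
    ⟨(hI.nonempty a).some, (hI.index_eq_of_mem (hI.nonempty a).some_mem).ge⟩

theorem add_one_lt_index_iff (hI : IntervalPartition I) {p k : ℕ} :
    (∀ i j, k ∈ I i → p ∈ I j → j + 1 < i) ↔ hI.index p + 1 < hI.index k :=
  ⟨fun h => h _ _ (hI.mem_index k) (hI.mem_index p), fun h i j hk hp => by
    rwa [← hI.index_eq_of_mem hk, ← hI.index_eq_of_mem hp]⟩

theorem exists_strictMono_subset (hI : IntervalPartition I) :
    ∃ e : ℕ → ℕ, StrictMono e ∧ I 0 ⊆ Set.Icc 0 (e 0) ∧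
      ∀ n, I (n + 1) ⊆ Set.Ioc (e n) (e (n + 1)) := by
  have hmem : ∀ n, sSup (I n) ∈ I n := fun n => Nat.sSup_mem (hI.nonempty n) (hI.fin n).bddAbove
  have hle : ∀ n, ∀ k ∈ I n, k ≤ sSup (I n) := fun n k hk => le_csSup (hI.fin n).bddAbove hk
  refine ⟨fun n => sSup (I n),
    strictMono_nat_of_lt_succ fun n => hI.consec n _ (hmem n) _ (hmem (n + 1)),
    fun k hk => ⟨k.zero_le, hle 0 k hk⟩, fun n k hk => ⟨hI.consec n _ (hmem n) k hk, hle _ k hk⟩⟩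

end IntervalPartition

section Coh

variable {X : Set ℕ} {I : ℕ → Set ℕ} {x : ℕ → Bool}

theorem IntervalPartition.cohSeq_succ (hI : IntervalPartition I) {n p : ℕ}
    (h : cohSeq X I x n = some p) :
    cohSeq X I x (n + 1) = nmin {k | k ∈ X ∧ x k = true ∧ hI.index p + 1 < hI.index k} := by
  simp only [cohSeq, h, hI.add_one_lt_index_iff]

theorem exists_cohSeq_eq_some_of_succ {n q : ℕ} (h : cohSeq X I x (n + 1) = some q) :
    ∃ p, cohSeq X I x n = some p := by
  rw [cohSeq] at h
  rcases hn : cohSeq X I x n with _ | p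
  · simp [hn] at h
  · exact ⟨p, rfl⟩

theorem mem_and_eq_true_of_cohSeq {n q : ℕ} (h : cohSeq X I x n = some q) :
    q ∈ X ∧ x q = true := by
  cases n with
  | zero => exact (nmin_eq_some_iff.1 h).1
  | succ n =>
    obtain ⟨p, hp⟩ := exists_cohSeq_eq_some_of_succ h
    rw [cohSeq, hp, nmin_eq_some_iff] at h
    exact ⟨h.1.1, h.1.2.1⟩

theorem coh_subset : coh X I x ⊆ X := fun _ ⟨_, h⟩ => (mem_and_eq_true_of_cohSeq h).1

theorem IntervalPartition.index_cohSeq_lt (hI : IntervalPartition I) {m m' p q : ℕ}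
    (hmm' : m < m') (hp : cohSeq X I x m = some p) (hq : cohSeq X I x m' = some q) :
    hI.index p < hI.index q := by
  induction m', hmm' using Nat.le_induction generalizing q with
  | base =>
    rw [hI.cohSeq_succ hp, nmin_eq_some_iff] at hq
    have := hq.1.2.2
    omega
  | succ m' _ ih =>
    obtain ⟨r, hr⟩ := exists_cohSeq_eq_some_of_succ hq
    rw [hI.cohSeq_succ hr, nmin_eq_some_iff] at hq
    have := ih hr
    have := hq.1.2.2
    omega

theorem IntervalPartition.subsingleton_coh_inter (hI : IntervalPartition I) (X : Set ℕ)
    (x : ℕ → Bool) (n : ℕ) : (coh X I x ∩ I n).Subsingleton := by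
  rintro p ⟨⟨m₁, hp⟩, hpn⟩ q ⟨⟨m₂, hq⟩, hqn⟩
  have hpq : hI.index p = hI.index q := by
    rw [hI.index_eq_of_mem hpn, hI.index_eq_of_mem hqn]
  rcases lt_trichotomy m₁ m₂ with h | rfl | h
  · exact absurd hpq (hI.index_cohSeq_lt h hp hq).ne
  · exact Option.some_injective _ (hp.symm.trans hq)
  · exact absurd hpq (hI.index_cohSeq_lt h hq hp).ne'

/-- While the sequence stays below `p`, `p` remains a candidate for its next term and the terms
increase, so the sequence reaches `p` within `p + 1` steps. -/
theorem IntervalPartition.mem_coh_of_forall_lt (hI : IntervalPartition I) {p : ℕ} (hpX : p ∈ X)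
    (hxp : x p = true)
    (hfar : ∀ q < p, q ∈ X → x q = true → hI.index q + 1 < hI.index p) : p ∈ coh X I x := by
  have key : ∀ n, p ∈ coh X I x ∨ ∃ q, cohSeq X I x n = some q ∧ q < p ∧ n ≤ q := by
    intro n
    induction n with
    | zero =>
      obtain ⟨q, hq⟩ := exists_nmin_eq_some (show p ∈ {k | k ∈ X ∧ x k = true} from ⟨hpX, hxp⟩)
      have hleast := nmin_eq_some_iff.1 hq
      rcases (hleast.2 ⟨hpX, hxp⟩).lt_or_eq with hlt | rfl
      · exact Or.inr ⟨q, hq, hlt, q.zero_le⟩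
      · exact Or.inl ⟨0, hq⟩
    | succ n ih =>
      obtain hp | ⟨q, hq, hqp, hnq⟩ := ih
      · exact Or.inl hp
      obtain ⟨hqX, hxq⟩ := mem_and_eq_true_of_cohSeq hq
      have hcand : p ∈ {k | k ∈ X ∧ x k = true ∧ hI.index q + 1 < hI.index k} :=
        ⟨hpX, hxp, hfar q hqp hqX hxq⟩
      obtain ⟨q', hq'⟩ := exists_nmin_eq_some hcand
      have hleast := nmin_eq_some_iff.1 hq'
      rw [← hI.cohSeq_succ hq] at hq'
      have hqq' : q < q' := hI.lt_of_index_lt (by have := hleast.1.2.2; omega)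
      rcases (hleast.2 hcand).lt_or_eq with hlt | rfl
      · exact Or.inr ⟨q', hq', hlt, by omega⟩
      · exact Or.inl ⟨n + 1, hq'⟩
  rcases key p with h | ⟨q, -, hqp, hpq⟩
  · exact h
  · omega

end Coh

theorem exists_mem_iInter_index_lt {n : ℕ} (X : Fin n → Set ℕ) (I : Fin n → ℕ → Set ℕ)
    (hI : ∀ i, IntervalPartition (I i)) (hX : (⋂ i, X i).Infinite) (B : ℕ) :
    ∃ k ∈ ⋂ i, X i, B < k ∧ ∀ i, ∀ q ≤ B, (hI i).index q + 1 < (hI i).index k := by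
  have hev : ∀ᶠ k in atTop, B < k ∧ ∀ i, (hI i).index B + 2 ≤ (hI i).index k :=
    (eventually_gt_atTop B).and
      (eventually_all.2 fun i => (hI i).tendsto_index.eventually_ge_atTop _)
  obtain ⟨k, hk, hBk, hfar⟩ := ((Nat.frequently_atTop_iff_infinite.2 hX).and_eventually hev).exists
  refine ⟨k, hk, hBk, fun i q hq => ?_⟩
  have := (hI i).index_mono hq
  have := hfar i
  omega

/-- Extend `s` by `0`s, except for `1`s at points `b 1 < ⋯ < b m` of `⋂ i, X i` such that
`b (j + 1)` lies at least two blocks of every `I i` beyond all `q ≤ b j`, where `b 0 = s.length`: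
then every `coh (X i) (I i) x` picks up all of them. -/
theorem isDenseCond_dset {n : ℕ} (X : Fin n → Set ℕ) (I : Fin n → ℕ → Set ℕ)
    (hI : ∀ i, IntervalPartition (I i)) (hX : (⋂ i, X i).Infinite) (m : ℕ) :
    IsDenseCond (Dset X I m) := by
  intro s
  choose f hfX hf_gt hf_far using exists_mem_iInter_index_lt X I hI hX
  set b : ℕ → ℕ := fun j => f^[j] s.length
  have hb_succ : ∀ j, b (j + 1) = f (b j) := fun j => Function.iterate_succ_apply' f j s.length
  have hb_mono : StrictMono b := strictMono_nat_of_lt_succ fun j => (hb_succ j).symm ▸ hf_gt _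
  have hb_ge : ∀ j, s.length ≤ b j := fun j => hb_mono.monotone j.zero_le
  set P : Finset ℕ := (Finset.range m).image fun j => b (j + 1)
  refine ⟨s ++ List.ofFn fun r : Fin (b m + 1 - s.length) => decide (s.length + r ∈ P), ?_,
    List.prefix_append _ _⟩
  intro x hx
  have hx_eq : ∀ k, s.length ≤ k → k ≤ b m → (x k = true ↔ k ∈ P) := by
    intro k hsk hkm
    have := hx.apply_length_add ⟨k - s.length, by omega⟩
    rw [show s.length + (k - s.length) = k by omega] at this
    simp [this]
  have hP : ∀ j < m, b (j + 1) ∈ ⋂ i, coh (X i) (I i) x := by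
    intro j hj
    have hjm : b (j + 1) ≤ b m := hb_mono.monotone hj
    refine Set.mem_iInter.2 fun i => (hI i).mem_coh_of_forall_lt ?_ ?_ ?_
    · rw [hb_succ]
      exact Set.mem_iInter.1 (hfX _) i
    · exact (hx_eq _ (hb_ge _) hjm).2 (Finset.mem_image_of_mem _ (Finset.mem_range.2 hj))
    · intro q hq _ hxq
      rw [hb_succ]
      refine hf_far (b j) i q (not_lt.1 fun hjq => ?_)
      obtain ⟨j', -, rfl⟩ := Finset.mem_image.1 ((hx_eq q (by have := hb_ge j; omega)
        (by omega)).1 hxq)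
      have := hb_mono.lt_iff_lt.1 hjq
      have := hb_mono.lt_iff_lt.1 hq
      omega
  refine ⟨P, ?_, fun k hk => ?_⟩
  · rw [Finset.card_image_of_injective _ fun j j' h => by simpa using hb_mono.injective h,
      Finset.card_range]
  · obtain ⟨j, hj, rfl⟩ := Finset.mem_image.1 hk
    exact hP j (Finset.mem_range.1 hj)

theorem infinite_iInter_coh_of_forall_dset {n : ℕ} {X : Fin n → Set ℕ} {I : Fin n → ℕ → Set ℕ}
    {x : ℕ → Bool} (h : ∀ m, ∃ s ∈ Dset X I m, ExtendsSeq x s) :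
    (⋂ i, coh (X i) (I i) x).Infinite := by
  intro hfin
  obtain ⟨s, hs, hxs⟩ := h (hfin.toFinset.card + 1)
  obtain ⟨T, hTcard, hT⟩ := hs x hxs
  have := Finset.card_le_card fun k hk => hfin.mem_toFinset.2 (hT hk)
  omega

/-- `A α` stands for the subsets of `ω` coded at stage `α`, and `x α` for a real that is Cohen
generic over stage `α` for the dense sets `Dset`. -/
structure GenericStages (δ : Ordinal) (inpa : Set ℕ → ℕ → Set ℕ) (A : Ordinal → Set (Set ℕ))
    (x : Ordinal → ℕ → Bool) : Prop where
  mono : ∀ α β, α ≤ β → β < δ → A α ⊆ A β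
  exhaust : ∀ Z, ∃ α < δ, Z ∈ A α
  univ_mem : ∀ α < δ, Set.univ ∈ A α
  inter_mem : ∀ α < δ, ∀ Z ∈ A α, ∀ W ∈ A α, Z ∩ W ∈ A α
  coh_mem : ∀ α < δ, ∀ Z ∈ A α, ∀ W ∈ A α, coh Set.univ (inpa Z) (chi W) ∈ A α
  infinite_iInter_coh : ∀ α < δ, ∀ (k : ℕ) (X Y : Fin k → Set ℕ), (∀ i, X i ∈ A α) →
    (∀ i, Y i ∈ A α) → (⋂ i, X i).Infinite → (⋂ i, coh (X i) (inpa (Y i)) (x α)).Infinite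

theorem Fd_val {cd : DenseSet → Set ℕ} {inpa : Set ℕ → ℕ → Set ℕ}
    (hinpa : ∀ Z, IntervalPartition (inpa Z)) {Dstar : DenseSet} {n m : ℕ}
    {v : Fin (n + n) → DenseSet} (h : (⋂ i, cd (v (Fin.castAdd n i))).Infinite) :
    (Fd cd inpa Dstar n m v).1 =
      Dset (fun i => cd (v (Fin.castAdd n i))) (fun i => inpa (cd (v (Fin.natAdd n i)))) m :=
  congrArg Subtype.val (dif_pos ⟨h, isDenseCond_dset _ _ (fun _ => hinpa _) h m⟩)

namespace IsPathway

variable {cd : DenseSet → Set ℕ} {dcd : Set ℕ → DenseSet} {inpa : Set ℕ → ℕ → Set ℕ}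
  {Dstar : DenseSet} {δ α : Ordinal} {seq : Ordinal → Set DenseSet}

theorem compl_mem (hid : ∀ Z, cd (dcd Z) = Z)
    (hpath : IsPathway covME (QPtOps cd dcd inpa Dstar) δ seq) (hα : α < δ) {Z : Set ℕ}
    (hZ : Z ∈ cd '' seq α) : Zᶜ ∈ cd '' seq α := by
  obtain ⟨D, hD, rfl⟩ := hZ
  exact ⟨_, hpath.closedF α hα _ (Or.inl (Or.inl rfl)) ![D] (by simp [hD]), hid _⟩

theorem inter_mem (hid : ∀ Z, cd (dcd Z) = Z)
    (hpath : IsPathway covME (QPtOps cd dcd inpa Dstar) δ seq) (hα : α < δ) {Z W : Set ℕ}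
    (hZ : Z ∈ cd '' seq α) (hW : W ∈ cd '' seq α) : Z ∩ W ∈ cd '' seq α := by
  obtain ⟨D, hD, rfl⟩ := hZ
  obtain ⟨D', hD', rfl⟩ := hW
  exact ⟨_, hpath.closedF α hα _ (Or.inl (Or.inr (Or.inl rfl))) ![D, D']
    (by simp [Fin.forall_fin_two, hD, hD']), hid _⟩

theorem coh_mem (hid : ∀ Z, cd (dcd Z) = Z)
    (hpath : IsPathway covME (QPtOps cd dcd inpa Dstar) δ seq) (hα : α < δ) {X Y W : Set ℕ}
    (hX : X ∈ cd '' seq α) (hY : Y ∈ cd '' seq α) (hW : W ∈ cd '' seq α) :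
    coh X (inpa Y) (chi W) ∈ cd '' seq α := by
  obtain ⟨D, hD, rfl⟩ := hX
  obtain ⟨D', hD', rfl⟩ := hY
  obtain ⟨D'', hD'', rfl⟩ := hW
  exact ⟨_, hpath.closedF α hα _ (Or.inl (Or.inr (Or.inr rfl))) ![D, D', D'']
    (by simp [Fin.forall_fin_succ, hD, hD', hD'']), hid _⟩

theorem univ_mem (hid : ∀ Z, cd (dcd Z) = Z)
    (hpath : IsPathway covME (QPtOps cd dcd inpa Dstar) δ seq) (hα : α < δ) :
    Set.univ ∈ cd '' seq α := by
  have hD := hpath.closedF α hα _ (Or.inr ⟨0, 0, rfl⟩) (fun i => i.elim0)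
    (fun i => i.elim0)
  have hZ : cd (Fd cd inpa Dstar 0 0 fun i => i.elim0) ∈ cd '' seq α := ⟨_, hD, rfl⟩
  simpa using hpath.compl_mem hid hα (hpath.inter_mem hid hα hZ (hpath.compl_mem hid hα hZ))

theorem exists_mem_dset (hinpa : ∀ Z, IntervalPartition (inpa Z))
    (hpath : IsPathway covME (QPtOps cd dcd inpa Dstar) δ seq) (hα : α < δ) {k : ℕ}
    {X Y : Fin k → Set ℕ} (hX : ∀ i, X i ∈ cd '' seq α) (hY : ∀ i, Y i ∈ cd '' seq α)
    (hinf : (⋂ i, X i).Infinite) (m : ℕ) :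
    ∃ D ∈ seq α, D.1 = Dset X (fun i => inpa (Y i)) m := by
  choose D hD hDX using hX
  choose D' hD' hDY using hY
  have hv : ∀ i, Fin.append D D' i ∈ seq α :=
    Fin.addCases (fun i => by rw [Fin.append_left]; exact hD i)
      (fun i => by rw [Fin.append_right]; exact hD' i)
  refine ⟨Fd cd inpa Dstar k m (Fin.append D D'),
    hpath.closedF α hα _ (Or.inr ⟨k, m, rfl⟩) _ hv, ?_⟩
  have hcast : (fun i => cd (Fin.append D D' (Fin.castAdd k i))) = X :=
    funext fun i => by rw [Fin.append_left, hDX]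
  have hnat : (fun i => inpa (cd (Fin.append D D' (Fin.natAdd k i)))) = fun i => inpa (Y i) :=
    funext fun i => by rw [Fin.append_right, hDY]
  have hinf' : (⋂ i, cd (Fin.append D D' (Fin.castAdd k i))).Infinite := by rwa [hcast]
  rw [Fd_val hinpa hinf', hcast, hnat]

end IsPathway

theorem IsPathway.genericStages {cd : DenseSet → Set ℕ} {dcd : Set ℕ → DenseSet}
    {inpa : Set ℕ → ℕ → Set ℕ} {Dstar : DenseSet} {δ : Ordinal} {seq : Ordinal → Set DenseSet}
    {x : Ordinal → ℕ → Bool} (hid : ∀ Z, cd (dcd Z) = Z) (hinpa : ∀ Z, IntervalPartition (inpa Z))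
    (hpath : IsPathway covME (QPtOps cd dcd inpa Dstar) δ seq)
    (hx : ∀ α < δ, ∀ D ∈ seq α, ¬ covME (x α) D) :
    GenericStages δ inpa (fun α => cd '' seq α) x where
  mono α β hαβ hβ := Set.image_mono (hpath.mono α β hαβ hβ)
  exhaust Z := by
    obtain ⟨α, hα, hZ⟩ := Set.mem_iUnion₂.1 (hpath.total ▸ Set.mem_univ (dcd Z))
    exact ⟨α, hα, _, hZ, hid Z⟩
  univ_mem _ hα := hpath.univ_mem hid hα
  inter_mem _ hα _ hZ _ hW := hpath.inter_mem hid hα hZ hW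
  coh_mem _ hα _ hZ _ hW := hpath.coh_mem hid hα (hpath.univ_mem hid hα) hZ hW
  infinite_iInter_coh α hα _ _ _ hX hY hinf := infinite_iInter_coh_of_forall_dset fun m => by
    obtain ⟨D, hD, hDval⟩ := hpath.exists_mem_dset hinpa hα hX hY hinf m
    obtain ⟨n, hn⟩ := not_forall_not.1 (hx α hα D hD)
    exact ⟨_, hDval ▸ hn, extendsSeq_ofFn _ n⟩

namespace GenericStages

variable {δ : Ordinal} {inpa : Set ℕ → ℕ → Set ℕ} {A : Ordinal → Set (Set ℕ)}
  {x : Ordinal → ℕ → Bool}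

theorem biInter_mem (hA : GenericStages δ inpa A x) {β : Ordinal} (hβ : β < δ) {ι : Type*}
    (F : Finset ι) {S : ι → Set ℕ} (hS : ∀ i ∈ F, S i ∈ A β) : (⋂ i ∈ F, S i) ∈ A β := by
  classical
  induction F using Finset.induction_on with
  | empty => simpa using hA.univ_mem β hβ
  | insert i F _ ih =>
    rw [Finset.set_biInter_insert]
    exact hA.inter_mem β hβ _ (hS i (F.mem_insert_self i)) _
      (ih fun j hj => hS j (Finset.mem_insert_of_mem hj))

theorem infinite_inter_biInter_coh (hA : GenericStages δ inpa A x) {β : Ordinal} (hβ : β < δ)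
    {T : Set ℕ} (hTA : T ∈ A β) (hT : T.Infinite) (G : Finset (Set ℕ)) (hG : ∀ Z ∈ G, Z ∈ A β) :
    (T ∩ ⋂ Z ∈ G, coh Set.univ (inpa Z) (x β)).Infinite := by
  set e := G.equivFin.symm
  have hgen := hA.infinite_iInter_coh β hβ (G.card + 1)
    (Fin.cons T fun _ => Set.univ) (Fin.cons Set.univ fun i => (e i : Set ℕ))
    (Fin.cases hTA fun _ => hA.univ_mem β hβ)
    (Fin.cases (hA.univ_mem β hβ) fun i => hG _ (e i).2)
    (by convert hT using 1; ext k; simp [Fin.forall_fin_succ])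
  refine hgen.mono fun k hk => ?_
  rw [Set.mem_iInter, Fin.forall_fin_succ] at hk
  refine ⟨coh_subset hk.1, Set.mem_iInter₂.2 fun Z hZ => ?_⟩
  simpa [e] using hk.2 (G.equivFin ⟨Z, hZ⟩)

/-- Induction on the largest value `β` of `τ` on `F`: the selectors with `τ Z < β` are coded at
stage `β`, and those with `τ Z = β` share the real `x β`, so a single application of genericity at
`β` handles them together with the intersection of the former. -/
theorem infinite_biInter (hA : GenericStages δ inpa A x) (τ : Set ℕ → Ordinal)
    (hτ : ∀ Z, τ Z < δ) (hZτ : ∀ Z, Z ∈ A (τ Z))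
    (hτS : ∀ Z Z', τ Z < τ Z' → coh Set.univ (inpa Z) (x (τ Z)) ∈ A (τ Z'))
    (F : Finset (Set ℕ)) : (⋂ Z ∈ F, coh Set.univ (inpa Z) (x (τ Z))).Infinite := by
  classical
  set S : Set ℕ → Set ℕ := fun Z => coh Set.univ (inpa Z) (x (τ Z))
  suffices h : ∀ O : Finset Ordinal, ∀ F : Finset (Set ℕ), F.image τ ⊆ O → (⋂ Z ∈ F, S Z).Infinite
    from h _ F subset_rfl
  intro O
  induction O using Finset.induction_on_max with
  | empty =>
    intro F hF
    rw [Finset.subset_empty, Finset.image_eq_empty] at hF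
    simpa [hF] using Set.infinite_univ
  | insert β O hO ih =>
    intro F hF
    by_cases hβ : ∃ Z₀ ∈ F, τ Z₀ = β
    swap
    · refine ih F fun γ hγ => ?_
      obtain ⟨Z, hZ, rfl⟩ := Finset.mem_image.1 hγ
      exact (Finset.mem_insert.1 (hF hγ)).resolve_left fun h => hβ ⟨Z, hZ, h⟩
    obtain ⟨Z₀, -, rfl⟩ := hβ
    set F₁ := F.filter fun Z => τ Z ≠ τ Z₀
    have hF₁ : ∀ Z ∈ F₁, τ Z < τ Z₀ := fun Z hZ => by
      obtain ⟨hZF, hne⟩ := Finset.mem_filter.1 hZ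
      exact hO _ ((Finset.mem_insert.1 (hF (Finset.mem_image_of_mem τ hZF))).resolve_left hne)
    set T := ⋂ Z ∈ F₁, S Z
    have hT : T.Infinite := ih F₁ fun γ hγ => by
      obtain ⟨Z, hZ, rfl⟩ := Finset.mem_image.1 hγ
      exact Finset.mem_of_mem_insert_of_ne (hF (Finset.mem_image_of_mem τ
        (Finset.mem_filter.1 hZ).1)) (Finset.mem_filter.1 hZ).2
    have hTA : T ∈ A (τ Z₀) := hA.biInter_mem (hτ Z₀) F₁ fun Z hZ => hτS Z Z₀ (hF₁ Z hZ)
    refine (hA.infinite_inter_biInter_coh (hτ Z₀) hTA hT (F.filter fun Z => τ Z = τ Z₀)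
      fun Z hZ => by rw [← (Finset.mem_filter.1 hZ).2]; exact hZτ Z).mono
      fun k hk => Set.mem_iInter₂.2 fun Z hZ => ?_
    by_cases hZβ : τ Z = τ Z₀
    · simpa [S, hZβ] using Set.mem_iInter₂.1 hk.2 Z (Finset.mem_filter.2 ⟨hZ, hZβ⟩)
    · exact Set.mem_iInter₂.1 hk.1 Z (Finset.mem_filter.2 ⟨hZ, hZβ⟩)

end GenericStages

noncomputable def Ordinal.dominatingSeq (f : Ordinal.{u} → Ordinal.{u}) (α : Ordinal.{u}) :
    Ordinal.{u} :=
  ⨆ β : Iio α, (dominatingSeq f β ⊔ f (dominatingSeq f β)) + 1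
termination_by α
decreasing_by exact β.2

namespace Ordinal

theorem max_dominatingSeq_lt {f : Ordinal.{u} → Ordinal.{u}} {β α : Ordinal.{u}} (h : β < α) :
    dominatingSeq f β ⊔ f (dominatingSeq f β) < dominatingSeq f α := by
  rw [dominatingSeq.eq_1 f α, ← Order.add_one_le_iff]
  exact Ordinal.le_iSup (fun γ : Iio α => (dominatingSeq f γ ⊔ f (dominatingSeq f γ)) + 1) ⟨β, h⟩

theorem strictMono_dominatingSeq (f : Ordinal.{u} → Ordinal.{u}) : StrictMono (dominatingSeq f) :=
  fun _ _ h => le_sup_left.trans_lt (max_dominatingSeq_lt h)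

theorem dominatingSeq_lt_ord {κ : Cardinal.{u}} (hκ : κ.IsRegular) {f : Ordinal.{u} → Ordinal.{u}}
    (hf : ∀ β < κ.ord, f β < κ.ord) {α : Ordinal.{u}} (hα : α < κ.ord) :
    dominatingSeq f α < κ.ord := by
  induction α using WellFoundedLT.induction with
  | _ α ih =>
    rw [dominatingSeq]
    refine lift_iSup_add_one_lt_of_lt_cof ?_ fun β => ?_
    · rw [Cardinal.mk_Iio_ordinal, Cardinal.lift_lift, ← lift_cof, hκ.cof_ord, Cardinal.lift_lt]
      exact Cardinal.lt_ord.mp hα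
    · have h := ih β β.2 (β.2.trans hα)
      exact max_lt h (hf _ h)

end Ordinal

namespace GenericStages

variable {inpa : Set ℕ → ℕ → Set ℕ} {A : Ordinal → Set (Set ℕ)} {x : Ordinal → ℕ → Bool}

/-- Take `τ Z = g (σ Z)`, where `σ Z` is a stage coding `Z` and `g` is strictly increasing with
`σ (code of x (g β)) < g α` for `β < α`: if `τ Z < τ Z'`, the code of `x (τ Z)` appears before
`τ Z'`. Regularity of `κ` keeps `g` below `κ.ord`. -/
theorem exists_stage {κ : Cardinal} (hκ : κ.IsRegular) (hA : GenericStages κ.ord inpa A x) :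
    ∃ τ : Set ℕ → Ordinal, (∀ Z, τ Z < κ.ord) ∧ (∀ Z, Z ∈ A (τ Z)) ∧
      ∀ Z Z', τ Z < τ Z' → coh Set.univ (inpa Z) (x (τ Z)) ∈ A (τ Z') := by
  choose! σ hσ hσA using hA.exhaust
  set g := Ordinal.dominatingSeq fun β => σ {k | x β k = true}
  have hg := Ordinal.strictMono_dominatingSeq fun β => σ {k | x β k = true}
  have hgδ : ∀ α < κ.ord, g α < κ.ord := fun α =>
    Ordinal.dominatingSeq_lt_ord hκ fun β _ => hσ _
  have hZ : ∀ Z, Z ∈ A (g (σ Z)) := fun Z =>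
    hA.mono _ _ hg.le_apply (hgδ _ (hσ Z)) (hσA Z)
  refine ⟨fun Z => g (σ Z), fun Z => hgδ _ (hσ Z), hZ, fun Z Z' hlt => ?_⟩
  have hτ' := hgδ _ (hσ Z')
  have hdom := Ordinal.max_dominatingSeq_lt (f := fun β => σ {k | x β k = true})
    (hg.lt_iff_lt.1 hlt)
  have hW := hA.mono _ _ (le_sup_right.trans hdom.le) hτ' (hσA {k | x (g (σ Z)) k = true})
  rw [← chi_setOf_eq_true (x (g (σ Z)))]
  exact hA.coh_mem _ hτ' _ (hA.mono _ _ hlt.le hτ' (hZ Z)) _ hW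

end GenericStages

theorem exists_ultrafilter_forall_mem_of_infinite {α ι : Type*} (S : ι → Set α)
    (hS : ∀ F : Finset ι, (⋂ i ∈ F, S i).Infinite) :
    ∃ u : Ultrafilter α, (∀ a, u ≠ pure a) ∧ ∀ i, S i ∈ u := by
  have : ((⨅ i, 𝓟 (S i)) ⊓ cofinite).NeBot :=
    ((hasBasis_iInf_principal_finite S).inf hasBasis_cofinite).neBot_iff.2 fun {p} hp => by
      simpa [Set.sdiff_eq] using ((hS hp.1.toFinset).sdiff hp.2).nonempty
  refine ⟨Ultrafilter.of ((⨅ i, 𝓟 (S i)) ⊓ cofinite), fun a ha => ?_, fun i => ?_⟩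
  · have h := (Ultrafilter.of_le ((⨅ i, 𝓟 (S i)) ⊓ cofinite)).trans inf_le_right
      (Set.finite_singleton a).compl_mem_cofinite
    simp [ha] at h
  · exact (Ultrafilter.of_le ((⨅ i, 𝓟 (S i)) ⊓ cofinite)).trans (inf_le_left.trans (iInf_le _ i))
      (mem_principal_self _)

/-- given coding functions `cd : 𝒟 → 𝔓(ω)`, `dcd : 𝔓(ω) → 𝒟` with
`cd ∘ dcd = id`, a fixed dense set `D*`, and `inpa : 𝔓(ω) → ℐ` as described, if `κ` is a
regular cardinal and there is a `⟨⟨2^ω, 𝒟, E⟩, ℱ_{Q-pt}, κ⟩`-pathway, then there is a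
Q-point: a nonprincipal ultrafilter `u` on `ω` such that every partition of `ω` into
consecutive finite intervals admits a partial selector in `u`. -/
theorem stmt18
    (cd : DenseSet → Set ℕ) (dcd : Set ℕ → DenseSet)
    (hid : ∀ Z : Set ℕ, cd (dcd Z) = Z)
    (Dstar : DenseSet)
    (inpa : Set ℕ → ℕ → Set ℕ)
    (hinpa : ∀ Z : Set ℕ, IntervalPartition (inpa Z))
    (hinpa' : ∀ Z : Set ℕ, Z.Infinite → ∀ e : ℕ → ℕ, StrictMono e → Set.range e = Z →
      inpa Z 0 = Set.Icc 0 (e 0) ∧ ∀ n, inpa Z (n + 1) = Set.Ioc (e n) (e (n + 1)))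
    (κ : Cardinal) (hκ : κ.IsRegular)
    (seq : Ordinal → Set DenseSet)
    (hpath : IsPathway covME (QPtOps cd dcd inpa Dstar) κ.ord seq) :
    ∃ u : Ultrafilter ℕ, (∀ a : ℕ, u ≠ pure a) ∧
      ∀ I : ℕ → Set ℕ, IntervalPartition I →
        ∃ Y ∈ u, ∀ n, (Y ∩ I n).Subsingleton := by
  choose! x hx using hpath.avoid
  have hA := hpath.genericStages hid hinpa hx
  obtain ⟨τ, hτ, hZτ, hτS⟩ := hA.exists_stage hκ
  obtain ⟨u, hu, hSu⟩ := exists_ultrafilter_forall_mem_of_infinite _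
    (hA.infinite_biInter τ hτ hZτ hτS)
  refine ⟨u, hu, fun I hI => ?_⟩
  obtain ⟨e, he, hI0, hIsucc⟩ := hI.exists_strictMono_subset
  obtain ⟨he0, hesucc⟩ := hinpa' _ (Set.infinite_range_of_injective he.injective) e he rfl
  refine ⟨_, hSu (Set.range e), fun n => ((hinpa _).subsingleton_coh_inter _ _ n).anti
    (Set.inter_subset_inter_right _ ?_)⟩
  cases n with
  | zero => rw [he0]; exact hI0
  | succ n => rw [hesucc]; exact hIsucc n
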